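/- arXiv:2604.12462 — 4 statements merged into one kernel-verified Lean document; each statement's English description precedes it below -/
import Mathlib

section
/- For any f as above, the entropy functional satisfies I_1(f) ≤ √(π/2) · I_2(f)^{1/2}, where I_1(f) = ∫ f log(f/‖f‖_1) dγ_d and I_2(f) = ∫ (f − ∫ f dγ_d)² dγ_d are taken with respect to the standard Gaussian measure γ_d on ℝ^d. -/
open MeasureTheory Real

noncomputable def gaussianMeasure (d : ℕ) : Measure (EuclideanSpace ℝ (Fin d)) :=
  (volume : Measure (EuclideanSpace ℝ (Fin d))).withDensity
    (fun x => ENNReal.ofReal ((2 * π) ^ (-(d : ℝ) / 2) * Real.exp (-‖x‖ ^ 2 / 2)))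

/-- The entropy functional `I_1`. -/
noncomputable def entropyFun (d : ℕ) (f : EuclideanSpace ℝ (Fin d) → ℝ) : ℝ :=
  ∫ x, f x * Real.log (f x / ∫ y, f y ∂(gaussianMeasure d)) ∂(gaussianMeasure d)

/-- The variance functional `I_2`. -/
noncomputable def varFun (d : ℕ) (f : EuclideanSpace ℝ (Fin d) → ℝ) : ℝ :=
  ∫ x, (f x - ∫ y, f y ∂(gaussianMeasure d)) ^ 2 ∂(gaussianMeasure d)

lemma two_log_le (q : ℝ) (hq : 1 ≤ q) : 2 * Real.log q ≤ q - 1/q := by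
  have hder : ∀ x ∈ Set.Ioi (1:ℝ), HasDerivAt (fun x : ℝ => x - 1/x - 2 * Real.log x)
      (1 - (-(1/x^2)) - 2 * x⁻¹) x := by
    intro x hx
    have hx0 : (0:ℝ) < x := lt_trans one_pos hx
    have ha : HasDerivAt (fun x : ℝ => 1/x) (-(1/x^2)) x := by
      simpa using (hasDerivAt_inv (ne_of_gt hx0))
    exact ((hasDerivAt_id x).sub ha).sub ((Real.hasDerivAt_log (ne_of_gt hx0)).const_mul 2)
  have hmono : MonotoneOn (fun x : ℝ => x - 1/x - 2 * Real.log x) (Set.Ici 1) := by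
    apply monotoneOn_of_deriv_nonneg (convex_Ici 1)
    · apply ContinuousOn.sub (ContinuousOn.sub continuousOn_id ?_) ?_
      · exact ContinuousOn.div continuousOn_const continuousOn_id
          (fun x hx => by simp at hx; positivity)
      · exact ContinuousOn.mul continuousOn_const
          (Real.continuousOn_log.mono (fun x hx => by simp at hx ⊢; positivity))
    · intro x hx
      rw [interior_Ici] at hx
      exact ((hder x hx).differentiableAt).differentiableWithinAt
    · intro x hx
      rw [interior_Ici] at hx
      have hx0 : (0:ℝ) < x := lt_trans one_pos hx
      rw [(hder x hx).deriv]
      have hx2 : (0:ℝ) < x^2 := by positivity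
      rw [inv_eq_one_div]
      rw [← sub_nonneg]
      field_simp
      nlinarith [sq_nonneg (x-1)]
  have := hmono (Set.mem_Ici.2 le_rfl) (Set.mem_Ici.2 hq) hq
  simp only [Real.log_one] at this
  linarith

lemma key_poly {q : ℝ} (hq : 1 ≤ q) :
    2*q^5 - q^4 - 2*q^3 + 1 ≤ 63/100*(q^6 - q^2) := by
  obtain ⟨e, he, rfl⟩ : ∃ e, 0 ≤ e ∧ q = 1 + e := ⟨q-1, by linarith, by ring⟩
  nlinarith [sq_nonneg (178*e^2 - 70), he, mul_nonneg he he,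
    mul_nonneg (mul_nonneg he he) he, mul_nonneg (mul_nonneg (mul_nonneg he he) he) he,
    mul_nonneg (mul_nonneg (mul_nonneg (mul_nonneg he he) he) he) he,
    mul_nonneg (mul_nonneg (mul_nonneg (mul_nonneg (mul_nonneg he he) he) he) he) he,
    mul_nonneg he (sq_nonneg (178*e^2 - 70))]

lemma key_ineq {t : ℝ} (ht : 0 < t) :
    t * Real.log t - t + 1 ≤ |t - 1| * Real.sqrt (3969/10000 * t + 11731/10000) := by
  rcases le_total t 1 with h1 | h1
  · have hlog : t * Real.log t ≤ 0 :=
      mul_nonpos_iff.2 (Or.inl ⟨ht.le, Real.log_nonpos ht.le h1⟩)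
    have habs : |t - 1| = 1 - t := by rw [abs_of_nonpos (by linarith)]; ring
    have hs : (1:ℝ) ≤ Real.sqrt (3969/10000 * t + 11731/10000) := by
      rw [show (1:ℝ) = Real.sqrt 1 from Real.sqrt_one.symm]
      exact Real.sqrt_le_sqrt (by nlinarith)
    have h2 : (1 - t) * 1 ≤ (1 - t) * Real.sqrt (3969/10000 * t + 11731/10000) :=
      mul_le_mul_of_nonneg_left hs (by linarith)
    rw [habs]
    nlinarith
  · set q : ℝ := t ^ ((1:ℝ)/4) with hqdef
    have hq0 : 0 < q := Real.rpow_pos_of_pos ht _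
    have hq1 : 1 ≤ q := by
      have := Real.rpow_le_rpow zero_le_one h1 (by norm_num : (0:ℝ) ≤ 1/4)
      rwa [Real.one_rpow] at this
    have hq4 : q^4 = t := by
      rw [hqdef, ← Real.rpow_natCast (t ^ ((1:ℝ)/4)) 4, ← Real.rpow_mul ht.le]
      norm_num
    have hlog : Real.log t = 4 * Real.log q := by
      rw [hqdef, Real.log_rpow ht]; ring
    have h2 : Real.log t ≤ 2 * (q - 1/q) := by
      have := two_log_le q hq1
      linarith [hlog]
    have h3 : t * Real.log t - t + 1 ≤ 2*q^5 - q^4 - 2*q^3 + 1 := by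
      have := mul_le_mul_of_nonneg_left h2 ht.le
      have he : t * (2 * (q - 1/q)) = 2*q^5 - 2*q^3 := by
        rw [← hq4]; field_simp
      nlinarith [hq4]
    have h4 : 2*q^5 - q^4 - 2*q^3 + 1 ≤ (63/100*q^2) * (t - 1) := by
      have := key_poly hq1
      nlinarith [hq4]
    have h5 : 63/100*q^2 ≤ Real.sqrt (3969/10000 * t + 11731/10000) := by
      have : (63/100*q^2 : ℝ) = Real.sqrt ((63/100*q^2)^2) := (Real.sqrt_sq (by positivity)).symm
      rw [this]
      apply Real.sqrt_le_sqrt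
      nlinarith [hq4]
    have habs : |t - 1| = t - 1 := abs_of_nonneg (by linarith)
    rw [habs]
    calc t * Real.log t - t + 1 ≤ (63/100*q^2) * (t - 1) := le_trans h3 h4
      _ ≤ Real.sqrt (3969/10000 * t + 11731/10000) * (t - 1) :=
          mul_le_mul_of_nonneg_right h5 (by linarith)
      _ = (t - 1) * Real.sqrt (3969/10000 * t + 11731/10000) := by ring

lemma gaussian_prob (d : ℕ) : IsProbabilityMeasure (gaussianMeasure d) := by
  constructor
  have hexp : (fun x : EuclideanSpace ℝ (Fin d) => Real.exp (-‖x‖^2/2))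
      = fun x => Real.exp (-(1/2:ℝ) * ‖x‖^2) := by
    funext x; congr 1; ring
  have hint0 : Integrable (fun x : EuclideanSpace ℝ (Fin d) =>
      Real.exp (-(1/2:ℝ) * ‖x‖^2)) := by
    have h := (GaussianFourier.integrable_cexp_neg_mul_sq_norm_add
      (V := EuclideanSpace ℝ (Fin d)) (b := (1/2:ℂ)) (by norm_num) 0 0).norm
    convert h using 2 with x
    simp [Complex.norm_exp]
    rw [← Complex.ofReal_pow, Complex.ofReal_re]
  have hρint : Integrable (fun x : EuclideanSpace ℝ (Fin d) =>
      (2 * π) ^ (-(d : ℝ) / 2) * Real.exp (-‖x‖ ^ 2 / 2)) := by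
    rw [show (fun x : EuclideanSpace ℝ (Fin d) =>
      (2 * π) ^ (-(d : ℝ) / 2) * Real.exp (-‖x‖ ^ 2 / 2))
      = fun x => (2 * π) ^ (-(d : ℝ) / 2) * Real.exp (-(1/2:ℝ) * ‖x‖^2) by
        funext x; rw [show -‖x‖^2/2 = -(1/2:ℝ) * ‖x‖^2 by ring]]
    exact hint0.const_mul _
  rw [gaussianMeasure, withDensity_apply _ MeasurableSet.univ, Measure.restrict_univ,
    ← ofReal_integral_eq_lintegral_ofReal hρint
      (ae_of_all _ fun x => by positivity)]
  have hval : ∫ x : EuclideanSpace ℝ (Fin d),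
      (2 * π) ^ (-(d : ℝ) / 2) * Real.exp (-‖x‖ ^ 2 / 2) = 1 := by
    rw [integral_const_mul]
    have h2 : ∫ x : EuclideanSpace ℝ (Fin d), Real.exp (-‖x‖ ^ 2 / 2)
        = ∫ x : EuclideanSpace ℝ (Fin d), Real.exp (-(1/2:ℝ) * ‖x‖^2) := by rw [hexp]
    rw [h2, GaussianFourier.integral_rexp_neg_mul_sq_norm (by norm_num : (0:ℝ) < 1/2)]
    rw [finrank_euclideanSpace_fin]
    rw [show π / (1/2:ℝ) = 2 * π by ring]
    rw [← Real.rpow_add (by positivity)]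
    rw [show (-(d:ℝ)/2 + (d:ℝ)/2) = 0 by ring, Real.rpow_zero]
  rw [hval, ENNReal.ofReal_one]

/-- `I_1(f) ≤ √(π/2) · I_2(f)^{1/2}`. -/
theorem entropy_le_sqrt_variance (d : ℕ)
    (f g : EuclideanSpace ℝ (Fin d) → ℝ) (c : ℝ) (hc : 0 < c)
    (hg : ContDiff ℝ (⊤ : ℕ∞) g) (hg0 : ∀ x, 0 ≤ g x)
    (hbd : ∀ n : ℕ, ∃ C : ℝ, ∀ x, ‖iteratedFDeriv ℝ n g x‖ ≤ C)
    (hf : f = fun x => g x + c) :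
    entropyFun d f ≤ Real.sqrt (π / 2) * (varFun d f) ^ ((1 : ℝ) / 2) := by
  haveI := gaussian_prob d
  unfold entropyFun varFun
  set μ := gaussianMeasure d with hμdef
  obtain ⟨C0, hC0⟩ := hbd 0
  have hgb : ∀ x, g x ≤ C0 := fun x => by
    have h := hC0 x
    rwa [norm_iteratedFDeriv_zero, Real.norm_eq_abs, abs_of_nonneg (hg0 x)] at h
  set M := C0 + c with hMdef
  have hfc : ∀ x, c ≤ f x := fun x => by rw [hf]; simpa using hg0 x
  have hfM : ∀ x, f x ≤ M := fun x => by rw [hf]; simpa [hMdef] using hgb x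
  have hfx0 : ∀ x, 0 < f x := fun x => lt_of_lt_of_le hc (hfc x)
  have hcM : c ≤ M := le_trans (hfc 0) (hfM 0)
  have hfcont : Continuous f := by rw [hf]; exact hg.continuous.add continuous_const
  have hfint : Integrable f μ := by
    apply Integrable.mono' (integrable_const M) hfcont.aestronglyMeasurable
    exact ae_of_all _ fun x => by
      rw [Real.norm_eq_abs, abs_of_nonneg (hfx0 x).le]; exact hfM x
  set m := ∫ y, f y ∂μ with hmdef
  have hmc : c ≤ m := by
    have h := integral_mono (integrable_const c) hfint (fun x => hfc x)
    simpa using h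
  have hmM : m ≤ M := by
    have h := integral_mono hfint (integrable_const M) (fun x => hfM x)
    simpa using h
  have hm0 : 0 < m := lt_of_lt_of_le hc hmc
  -- the two auxiliary functions
  set a : EuclideanSpace ℝ (Fin d) → ℝ := fun x => |f x - m| with hadef
  set b : EuclideanSpace ℝ (Fin d) → ℝ :=
    fun x => Real.sqrt (3969/10000 * (f x / m) + 11731/10000) with hbdef
  have hacont : Continuous a := (hfcont.sub continuous_const).abs
  have hbcont : Continuous b := ((continuous_const.mul (hfcont.div_const m)).add continuous_const).sqrt
  have hann : ∀ x, 0 ≤ a x := fun x => abs_nonneg _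
  have hbnn : ∀ x, 0 ≤ b x := fun x => Real.sqrt_nonneg _
  have habd : ∀ x, a x ≤ M + m := fun x => by
    rw [hadef]; rw [abs_le]; constructor
    · have := hfx0 x; simp only [neg_le_sub_iff_le_add]; nlinarith
    · have := hfM x; nlinarith [hm0]
  set B := Real.sqrt (3969/10000 * (M / m) + 11731/10000) with hBdef
  have hbbd : ∀ x, b x ≤ B := fun x => by
    apply Real.sqrt_le_sqrt
    have h1 : f x / m ≤ M / m := by gcongr; exact hfM x
    nlinarith
  -- key pointwise estimate
  have hkey : ∀ x, f x * Real.log (f x / m) - f x + m ≤ a x * b x := by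
    intro x
    have ht : 0 < f x / m := div_pos (hfx0 x) hm0
    have h := key_ineq ht
    have h2 := mul_le_mul_of_nonneg_left h hm0.le
    have e1 : m * (f x / m * Real.log (f x / m) - f x / m + 1)
        = f x * Real.log (f x / m) - f x + m := by field_simp
    have e2 : m * (|f x / m - 1| * Real.sqrt (3969/10000 * (f x / m) + 11731/10000))
        = a x * b x := by
      simp only [hadef, hbdef]
      have e3 : f x - m = m * (f x / m - 1) := by field_simp
      rw [e3, abs_mul, abs_of_nonneg hm0.le]
      ring
    rw [e1, e2] at h2
    exact h2
  -- integrability facts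
  have hlogcont : Continuous fun x => Real.log (f x / m) :=
    (hfcont.div_const m).log fun x => ne_of_gt (div_pos (hfx0 x) hm0)
  set K := |Real.log (c/m)| + |Real.log (M/m)| with hKdef
  have hKb : ∀ x, |Real.log (f x / m)| ≤ K := fun x => by
    have hl : Real.log (c/m) ≤ Real.log (f x / m) :=
      Real.log_le_log (div_pos hc hm0) (by gcongr; exact hfc x)
    have hu : Real.log (f x / m) ≤ Real.log (M/m) :=
      Real.log_le_log (div_pos (hfx0 x) hm0) (by gcongr; exact hfM x)
    rw [abs_le]; constructor
    · have := neg_abs_le (Real.log (c/m)); have := abs_nonneg (Real.log (M/m)); linarith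
    · have := le_abs_self (Real.log (M/m)); have := abs_nonneg (Real.log (c/m)); linarith
  have hentcont : Continuous fun x => f x * Real.log (f x / m) := hfcont.mul hlogcont
  have hentint : Integrable (fun x => f x * Real.log (f x / m)) μ := by
    apply Integrable.mono' (integrable_const (M * K)) hentcont.aestronglyMeasurable
    exact ae_of_all _ fun x => by
      rw [Real.norm_eq_abs, abs_mul, abs_of_nonneg (hfx0 x).le]
      exact mul_le_mul (hfM x) (hKb x) (abs_nonneg _) (le_trans hc.le hcM)
  have habint : Integrable (fun x => a x * b x) μ := by
    apply Integrable.mono' (integrable_const ((M + m) * B)) (hacont.mul hbcont).aestronglyMeasurable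
    exact ae_of_all _ fun x => by
      rw [Real.norm_eq_abs, Pi.mul_apply, abs_mul, abs_of_nonneg (hann x), abs_of_nonneg (hbnn x)]
      exact mul_le_mul (habd x) (hbbd x) (hbnn x) (by nlinarith [hm0])
  have hphiint : Integrable (fun x => f x * Real.log (f x / m) - f x + m) μ :=
    (hentint.sub hfint).add (integrable_const m)
  -- Step 1 : entropy as integral of Φ
  have hstep1 : ∫ x, f x * Real.log (f x / m) ∂μ
      = ∫ x, (f x * Real.log (f x / m) - f x + m) ∂μ := by
    have hsub : Integrable (fun x => f x * Real.log (f x / m) - f x) μ := hentint.sub hfint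
    rw [integral_add hsub (integrable_const m), integral_sub hentint hfint, integral_const]
    simp only [probReal_univ, ENNReal.toReal_one, smul_eq_mul, one_mul]
    rw [← hmdef]
    ring
  -- Step 2 : pointwise bound
  have hstep2 : ∫ x, (f x * Real.log (f x / m) - f x + m) ∂μ ≤ ∫ x, a x * b x ∂μ :=
    integral_mono hphiint habint hkey
  -- Step 3 : Cauchy-Schwarz
  have hpq : (2:ℝ).HolderConjugate 2 := Real.HolderConjugate.two_two
  have hmema : MemLp a (ENNReal.ofReal 2) μ := by
    apply MemLp.of_bound hacont.aestronglyMeasurable (M + m)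
    exact ae_of_all _ fun x => by
      rw [Real.norm_eq_abs, abs_of_nonneg (hann x)]; exact habd x
  have hmemb : MemLp b (ENNReal.ofReal 2) μ := by
    apply MemLp.of_bound hbcont.aestronglyMeasurable B
    exact ae_of_all _ fun x => by
      rw [Real.norm_eq_abs, abs_of_nonneg (hbnn x)]; exact hbbd x
  have hCS := integral_mul_le_Lp_mul_Lq_of_nonneg hpq
    (ae_of_all _ hann) (ae_of_all _ hbnn) hmema hmemb
  -- identify the two factors
  have ha2 : ∫ x, a x ^ (2:ℝ) ∂μ = ∫ x, (f x - m) ^ 2 ∂μ := by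
    apply integral_congr_ae
    refine ae_of_all _ fun x => ?_
    show a x ^ (2:ℝ) = (f x - m) ^ 2
    rw [show (2:ℝ) = ((2:ℕ):ℝ) by norm_num, Real.rpow_natCast]
    simp only [hadef, sq_abs]
  have hb2 : ∫ x, b x ^ (2:ℝ) ∂μ = 157/100 := by
    have h1 : ∀ x, b x ^ (2:ℝ) = (3969/10000/m) * f x + 11731/10000 := by
      intro x
      have h0 : 0 < f x / m := div_pos (hfx0 x) hm0
      rw [show (2:ℝ) = ((2:ℕ):ℝ) by norm_num, Real.rpow_natCast]
      simp only [hbdef]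
      rw [Real.sq_sqrt (by nlinarith : (0:ℝ) ≤ 3969/10000 * (f x / m) + 11731/10000)]
      field_simp
    rw [integral_congr_ae (ae_of_all _ h1), integral_add (hfint.const_mul _) (integrable_const _),
      integral_const_mul]
    simp only [← hmdef]
    rw [integral_const]
    simp only [probReal_univ, ENNReal.toReal_one, smul_eq_mul, one_mul]
    field_simp
    ring
  -- put it together
  have hvar_nn : 0 ≤ ∫ x, (f x - m) ^ 2 ∂μ :=
    integral_nonneg fun x => sq_nonneg _
  calc ∫ x, f x * Real.log (f x / m) ∂μ
      ≤ ∫ x, a x * b x ∂μ := by rw [hstep1]; exact hstep2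
    _ ≤ (∫ x, a x ^ (2:ℝ) ∂μ) ^ ((1:ℝ)/2) * (∫ x, b x ^ (2:ℝ) ∂μ) ^ ((1:ℝ)/2) := hCS
    _ = (∫ x, (f x - m) ^ 2 ∂μ) ^ ((1:ℝ)/2) * ((157:ℝ)/100) ^ ((1:ℝ)/2) := by
        rw [ha2, hb2]
    _ ≤ (∫ x, (f x - m) ^ 2 ∂μ) ^ ((1:ℝ)/2) * (π/2) ^ ((1:ℝ)/2) := by
        apply mul_le_mul_of_nonneg_left _ (Real.rpow_nonneg hvar_nn _)
        apply Real.rpow_le_rpow (by norm_num)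
        · linarith [Real.pi_gt_d6]
        · norm_num
    _ = Real.sqrt (π/2) * (∫ x, (f x - m) ^ 2 ∂μ) ^ ((1:ℝ)/2) := by
        rw [Real.sqrt_eq_rpow]; ring
end

section
/- For every 0 < p < 1 and every f as above, one has the lower bound Γ(1−p)^{1/p} · (‖f‖_1^p − ‖f‖_p^p)^{1/p} ≤ I_1(f), where I_1(f) = ∫ f log(f/‖f‖_1) dγ_d is the entropy with respect to the standard Gaussian measure. -/
open MeasureTheory Real

lemma my_amgm {w q : ℝ} (hw : 0 < w) (hq0 : 0 ≤ q) (hq1 : q ≤ 1) :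
    w ^ q ≤ q * w + (1 - q) := by
  have h := convexOn_exp.2 (Set.mem_univ (Real.log w)) (Set.mem_univ (0:ℝ)) hq0
    (by linarith : (0:ℝ) ≤ 1 - q) (by ring)
  simp only [smul_eq_mul, mul_zero, add_zero, Real.exp_zero, Real.exp_log hw] at h
  rw [Real.rpow_def_of_pos hw, mul_comm]
  linarith

lemma my_gamma_le_one {q : ℝ} (h0 : 0 ≤ q) (h1 : q ≤ 1) : Real.Gamma (1 + q) ≤ 1 := by
  have h2 : Real.Gamma 2 = 1 := by
    rw [show (2:ℝ) = 1 + 1 by norm_num, Real.Gamma_add_one one_ne_zero, Real.Gamma_one, mul_one]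
  have h := Real.convexOn_Gamma.2 (show (1:ℝ) ∈ Set.Ioi 0 by norm_num)
    (show (2:ℝ) ∈ Set.Ioi 0 by norm_num) (by linarith : (0:ℝ) ≤ 1 - q) h0 (by ring)
  simp only [smul_eq_mul, Real.Gamma_one, h2, mul_one] at h
  calc Real.Gamma (1 + q) = Real.Gamma ((1-q) * 1 + q * 2) := by ring_nf
    _ ≤ (1-q) * 1 + q * 1 := by simpa using h
    _ ≤ 1 := by linarith

lemma my_star {p t : ℝ} (hp0 : 0 < p) (hp1 : p < 1) (ht : 0 < t)
    (h : p ≤ Real.Gamma (2 - p) * t ^ (1 - p)) :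
    Real.Gamma (2 - p) * t ^ (1 - p) / p - 1 - Real.log (Real.Gamma (2 - p) * t ^ (1 - p) / p)
      ≤ (1 - p) ^ 2 * t / p := by
  have hq0 : (0:ℝ) < 1 - p := by linarith
  have hG : 0 < Real.Gamma (2 - p) := Real.Gamma_pos_of_pos (by linarith)
  have hGle : Real.Gamma (2 - p) ≤ 1 := by
    have := my_gamma_le_one (le_of_lt hq0) (by linarith)
    rwa [show (1:ℝ) + (1 - p) = 2 - p by ring] at this
  set G := Real.Gamma (2 - p) with hGdef
  set C := G / p with hCdef
  have hC : 0 < C := div_pos hG hp0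
  set F : ℝ → ℝ := fun v => (1-p)^2 * Real.exp v / p + (1 + Real.log C + (1-p)*v)
      - C * Real.exp ((1-p)*v) with hF
  have hFderiv : ∀ v : ℝ, HasDerivAt F
      (((1-p)/p) * ((1-p) * Real.exp v + p - G * Real.exp ((1-p)*v))) v := by
    intro v
    have h1 : HasDerivAt (fun v : ℝ => Real.exp v) (Real.exp v) v := Real.hasDerivAt_exp v
    have h2 : HasDerivAt (fun v : ℝ => (1-p)*v) (1-p) v := by
      simpa using (hasDerivAt_id v).const_mul (1-p)
    have h3 : HasDerivAt (fun v : ℝ => Real.exp ((1-p)*v))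
        (Real.exp ((1-p)*v) * (1-p)) v := h2.exp
    have h4 := (((h1.const_mul ((1-p)^2)).div_const p).add
      ((h2.const_add (1 + Real.log C)))).sub (h3.const_mul C)
    refine h4.congr_deriv ?_
    rw [hCdef]
    field_simp
  have hmono : Monotone F := by
    apply monotone_of_deriv_nonneg
    · exact fun v => (hFderiv v).differentiableAt
    · intro v
      rw [(hFderiv v).deriv]
      apply mul_nonneg (by positivity)
      have hamg : Real.exp ((1-p)*v) ≤ (1-p) * Real.exp v + p := by
        have := my_amgm (Real.exp_pos v) (le_of_lt hq0) (by linarith)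
        calc Real.exp ((1-p)*v) = Real.exp (v * (1-p)) := by ring_nf
          _ = (Real.exp v) ^ (1-p) := Real.exp_mul v (1-p)
          _ ≤ (1-p) * Real.exp v + (1 - (1-p)) := this
          _ = (1-p) * Real.exp v + p := by ring
      have hx := mul_le_of_le_one_left (Real.exp_pos ((1-p)*v)).le hGle
      linarith
  set v₀ : ℝ := -Real.log C / (1-p) with hv₀
  have hv0exp : Real.exp ((1-p)*v₀) = C⁻¹ := by
    rw [show (1-p) * v₀ = -Real.log C by rw [hv₀]; field_simp, Real.exp_neg, Real.exp_log hC]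
  have hFv0 : 0 ≤ F v₀ := by
    have : F v₀ = (1-p)^2 * Real.exp v₀ / p := by
      rw [hF]
      simp only [hv0exp]
      rw [show (1-p) * v₀ = -Real.log C by rw [hv₀]; field_simp]
      rw [mul_inv_cancel₀ hC.ne']
      ring
    rw [this]; positivity
  have hv01 : v₀ ≤ Real.log t := by
    have hR1 : (1:ℝ) ≤ C * t ^ (1-p) := by
      rw [hCdef]
      rw [div_mul_eq_mul_div, le_div_iff₀ hp0, one_mul]
      linarith
    have hlog : 0 ≤ Real.log C + (1-p) * Real.log t := by
      have := Real.log_le_log (by norm_num) hR1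
      rwa [Real.log_one, Real.log_mul hC.ne' (ne_of_gt (Real.rpow_pos_of_pos ht _)),
        Real.log_rpow ht] at this
    rw [hv₀, div_le_iff₀ hq0]
    nlinarith
  have hle := hmono hv01
  have hFt : F (Real.log t) = (1-p)^2 * t / p + (1 + Real.log C + (1-p) * Real.log t)
      - C * t ^ (1-p) := by
    rw [hF]
    simp only [Real.exp_log ht]
    rw [show (1-p) * Real.log t = Real.log t * (1-p) by ring, ← Real.rpow_def_of_pos ht]
  have hlogR : Real.log (G * t ^ (1-p) / p) = Real.log C + (1-p) * Real.log t := by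
    rw [show G * t ^ (1-p) / p = C * t ^ (1-p) by rw [hCdef]; ring,
      Real.log_mul hC.ne' (ne_of_gt (Real.rpow_pos_of_pos ht _)), Real.log_rpow ht]
  have hRid : G * t ^ (1-p) / p = C * t ^ (1-p) := by rw [hCdef]; ring
  rw [hlogR, hRid]
  rw [hFt] at hle
  linarith [hFv0.trans hle]

lemma my_pw {p t z : ℝ} (hp0 : 0 < p) (hp1 : p < 1) (ht : 0 < t) (hz : 0 < z) :
    Real.Gamma (1-p) * (z - z ^ p) ≤
      p * t ^ (p-1) * (z * Real.log z) + (1-p) * t ^ p * z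
        + (max (p * t ^ (p-1) - Real.Gamma (2-p)) 0) * (1 - z) := by
  have hq0 : (0:ℝ) < 1 - p := by linarith
  have hG1 : 0 < Real.Gamma (1-p) := Real.Gamma_pos_of_pos hq0
  have hG2id : Real.Gamma (2-p) = (1-p) * Real.Gamma (1-p) := by
    rw [show (2:ℝ) - p = (1-p) + 1 by ring, Real.Gamma_add_one (ne_of_gt hq0)]
  have hG2 : 0 < Real.Gamma (2-p) := by rw [hG2id]; positivity
  have htp1 : 0 < t ^ (p-1) := Real.rpow_pos_of_pos ht _
  have htp2 : 0 < t ^ (1-p) := Real.rpow_pos_of_pos ht _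
  have htpid : t ^ (p-1) * t ^ (1-p) = 1 := by
    rw [← Real.rpow_add ht]; norm_num
  have htpt : t ^ (p-1) * t = t ^ p := by
    rw [show p = (p-1) + 1 by ring, Real.rpow_add_one (ne_of_gt ht)]
    ring_nf
  -- z^p = z^(p-1) * z
  have hzpid : z ^ p = z ^ (p-1) * z := by
    rw [show p = (p-1) + 1 by ring, Real.rpow_add_one (ne_of_gt hz)]
    ring_nf
  -- e2 : z - 1 ≤ z * log z
  have e2 : z - 1 ≤ z * Real.log z := by
    have h := Real.log_le_sub_one_of_pos (inv_pos.mpr hz)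
    rw [Real.log_inv] at h
    have := mul_le_mul_of_nonneg_left h hz.le
    have hzi : z * z⁻¹ = 1 := mul_inv_cancel₀ hz.ne'
    nlinarith
  rcases le_total (Real.Gamma (2-p)) (p * t ^ (p-1)) with hcase | hcase
  · -- case A
    have e1 : z - z ^ p ≤ (1-p) * (z * Real.log z) := by
      have h := Real.add_one_le_exp ((p-1) * Real.log z)
      have hex : Real.exp ((p-1) * Real.log z) = z ^ (p-1) := by
        rw [Real.rpow_def_of_pos hz, mul_comm]
      rw [hex] at h
      nlinarith [mul_le_mul_of_nonneg_left h hz.le]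
    have ha : 0 ≤ p * t ^ (p-1) - Real.Gamma (2-p) := by linarith
    rw [max_eq_left ha]
    have h1 : Real.Gamma (1-p) * (z - z ^ p) ≤ Real.Gamma (2-p) * (z * Real.log z) := by
      rw [hG2id]
      nlinarith [mul_le_mul_of_nonneg_left e1 hG1.le]
    have h2 : (p * t ^ (p-1) - Real.Gamma (2-p)) * (-(z * Real.log z))
        ≤ (p * t ^ (p-1) - Real.Gamma (2-p)) * (1 - z) :=
      mul_le_mul_of_nonneg_left (by linarith) ha
    have h3 : 0 ≤ (1-p) * t ^ p * z := by positivity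
    nlinarith
  · -- case B
    rw [max_eq_right (by linarith)]
    set R := Real.Gamma (2-p) * t ^ (1-p) / p with hRdef
    have hR0 : 0 < R := by positivity
    have hR1 : 1 ≤ R := by
      rw [hRdef, le_div_iff₀ hp0, one_mul]
      calc p = p * (t ^ (p-1) * t ^ (1-p)) := by rw [htpid]; ring
        _ = (p * t ^ (p-1)) * t ^ (1-p) := by ring
        _ ≤ Real.Gamma (2-p) * t ^ (1-p) := by
            exact mul_le_mul_of_nonneg_right hcase htp2.le
    have hstar := my_star hp0 hp1 ht (by
      rw [hRdef, le_div_iff₀ hp0, one_mul] at hR1; linarith)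
    rw [← hRdef] at hstar
    -- hstep : 1 + log R + (p-1) * log z ≤ R * z^(p-1)
    have hstep : 1 + (Real.log R + (p-1) * Real.log z) ≤ R * z ^ (p-1) := by
      have h := Real.add_one_le_exp (Real.log R + (p-1) * Real.log z)
      have hex : Real.exp (Real.log R + (p-1) * Real.log z) = R * z ^ (p-1) := by
        rw [Real.exp_add, Real.exp_log hR0, Real.rpow_def_of_pos hz, mul_comm (Real.log z)]
      rw [hex] at h
      linarith
    -- m1 : z * (1 + log R + (p-1) log z) ≤ R * z^p
    have m1 : z * (1 + Real.log R + (p-1) * Real.log z) ≤ R * z ^ p := by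
      have := mul_le_mul_of_nonneg_left hstep hz.le
      rw [hzpid]
      nlinarith
    -- hS : Γ(1-p) * (R - 1 - log R) ≤ R * ((1-p) * t^p)
    have hS : Real.Gamma (1-p) * (R - 1 - Real.log R) ≤ R * ((1-p) * t ^ p) := by
      have h1 : Real.Gamma (1-p) * (R - 1 - Real.log R)
          ≤ Real.Gamma (1-p) * ((1-p)^2 * t / p) :=
        mul_le_mul_of_nonneg_left hstar hG1.le
      have htsum : t ^ (1-p) * t ^ p = t := by
        rw [← Real.rpow_add ht]; norm_num
      have h2 : R * ((1-p) * t ^ p) = Real.Gamma (1-p) * ((1-p)^2 * t / p) := by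
        rw [hRdef, hG2id]
        field_simp
        linear_combination htsum
      linarith
    -- multiplied-by-R main inequality
    have hRp : R * (p * t ^ (p-1)) = Real.Gamma (2-p) := by
      rw [hRdef]
      field_simp
      linear_combination htpid
    have hmain : R * (Real.Gamma (1-p) * (z - z ^ p))
        ≤ R * (p * t ^ (p-1) * (z * Real.log z) + (1-p) * t ^ p * z) := by
      have hq1 : R * (z - z ^ p) ≤ R * z - z * (1 + Real.log R + (p-1) * Real.log z) := by
        linarith [m1]
      have hq2 : Real.Gamma (1-p) * (R * (z - z ^ p))
          ≤ Real.Gamma (1-p) * (R * z - z * (1 + Real.log R + (p-1) * Real.log z)) :=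
        mul_le_mul_of_nonneg_left hq1 hG1.le
      have hq3 : Real.Gamma (1-p) * (R * z - z * (1 + Real.log R + (p-1) * Real.log z))
          = Real.Gamma (2-p) * (z * Real.log z)
            + z * (Real.Gamma (1-p) * (R - 1 - Real.log R)) := by
        rw [hG2id]; ring
      have hq4 : z * (Real.Gamma (1-p) * (R - 1 - Real.log R))
          ≤ z * (R * ((1-p) * t ^ p)) := mul_le_mul_of_nonneg_left hS hz.le
      calc R * (Real.Gamma (1-p) * (z - z ^ p))
          = Real.Gamma (1-p) * (R * (z - z ^ p)) := by ring
        _ ≤ Real.Gamma (1-p) * (R * z - z * (1 + Real.log R + (p-1) * Real.log z)) := hq2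
        _ = Real.Gamma (2-p) * (z * Real.log z)
            + z * (Real.Gamma (1-p) * (R - 1 - Real.log R)) := hq3
        _ ≤ Real.Gamma (2-p) * (z * Real.log z) + z * (R * ((1-p) * t ^ p)) := by
            linarith [hq4]
        _ = R * (p * t ^ (p-1) * (z * Real.log z) + (1-p) * t ^ p * z) := by
            rw [← hRp]; ring
    have := (mul_le_mul_iff_right₀ hR0).mp hmain
    linarith


lemma gaussian_integrable (d : ℕ) :
    Integrable (fun x : EuclideanSpace ℝ (Fin d) => Real.exp (-‖x‖ ^ 2 / 2)) volume := by
  have h := GaussianFourier.integrable_cexp_neg_mul_sq_norm_add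
    (V := EuclideanSpace ℝ (Fin d)) (b := (1/2 : ℂ)) (by norm_num) 0 0
  simp only [zero_mul, add_zero] at h
  have h2 := h.re
  apply h2.congr
  filter_upwards with x
  have : (-(1/2 : ℂ) * (‖x‖:ℂ) ^ 2) = ((-‖x‖^2/2 : ℝ) : ℂ) := by push_cast; ring
  rw [this]
  exact Complex.exp_ofReal_re _

lemma gaussian_density_integral (d : ℕ) :
    ∫ x : EuclideanSpace ℝ (Fin d),
      (2 * π) ^ (-(d : ℝ) / 2) * Real.exp (-‖x‖ ^ 2 / 2) = 1 := by
  rw [integral_const_mul]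
  have h1 : (fun x : EuclideanSpace ℝ (Fin d) => Real.exp (-‖x‖ ^ 2 / 2))
      = fun x => Real.exp (-(1/2) * ‖x‖ ^ 2) := by
    funext x; ring_nf
  have h2 := GaussianFourier.integral_rexp_neg_mul_sq_norm
    (V := EuclideanSpace ℝ (Fin d)) (b := (1/2 : ℝ)) (by norm_num)
  rw [show ∫ x : EuclideanSpace ℝ (Fin d), Real.exp (-‖x‖ ^ 2 / 2)
      = ∫ x : EuclideanSpace ℝ (Fin d), Real.exp (-(1/2) * ‖x‖ ^ 2) from by rw [h1],
    h2, finrank_euclideanSpace_fin]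
  rw [show (π / (1/2) : ℝ) = 2 * π by ring]
  rw [← Real.rpow_add (by positivity : (0:ℝ) < 2 * π),
    show (-(d:ℝ)/2 + (d:ℝ)/2) = 0 by ring, Real.rpow_zero]

instance gaussian_isProbability (d : ℕ) : IsProbabilityMeasure (gaussianMeasure d) := by
  constructor
  rw [gaussianMeasure, withDensity_apply _ MeasurableSet.univ, Measure.restrict_univ]
  have hint : Integrable (fun x : EuclideanSpace ℝ (Fin d) =>
      (2 * π) ^ (-(d : ℝ) / 2) * Real.exp (-‖x‖ ^ 2 / 2)) volume :=
    (gaussian_integrable d).const_mul _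
  rw [← ofReal_integral_eq_lintegral_ofReal hint
    (Filter.Eventually.of_forall fun x => by positivity)]
  rw [gaussian_density_integral d]
  simp

/-- Lower bound on the entropy: for `0 < p < 1`,
`Γ(1−p)^{1/p} (‖f‖_1^p − ‖f‖_p^p)^{1/p} ≤ I_1(f)`. -/
theorem entropy_lower_bound (d : ℕ) (p : ℝ) (hp0 : 0 < p) (hp1 : p < 1)
    (f g : EuclideanSpace ℝ (Fin d) → ℝ) (c : ℝ) (hc : 0 < c)
    (hg : ContDiff ℝ (⊤ : ℕ∞) g) (hg0 : ∀ x, 0 ≤ g x)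
    (hbd : ∀ n : ℕ, ∃ C : ℝ, ∀ x, ‖iteratedFDeriv ℝ n g x‖ ≤ C)
    (hf : f = fun x => g x + c) :
    (Real.Gamma (1 - p)) ^ (1 / p) *
        ((∫ x, f x ∂(gaussianMeasure d)) ^ p
          - ∫ x, (f x) ^ p ∂(gaussianMeasure d)) ^ (1 / p)
      ≤ entropyFun d f := by
  have hq0 : (0:ℝ) < 1 - p := by linarith
  have hG1 : 0 < Real.Gamma (1-p) := Real.Gamma_pos_of_pos hq0
  obtain ⟨C₀, hC₀⟩ := hbd 0
  set M := C₀ + c with hM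
  have hfc : Continuous f := by rw [hf]; exact (hg.continuous).add continuous_const
  have hflb : ∀ x, c ≤ f x := by
    intro x; rw [hf]; show c ≤ g x + c; linarith [hg0 x]
  have hfub : ∀ x, f x ≤ M := by
    intro x; rw [hf]; show g x + c ≤ C₀ + c
    have h1 := hC₀ x
    rw [norm_iteratedFDeriv_zero, Real.norm_eq_abs] at h1
    have : g x ≤ C₀ := le_trans (le_abs_self _) h1
    linarith
  have hf0 : ∀ x, 0 < f x := fun x => lt_of_lt_of_le hc (hflb x)
  unfold entropyFun
  set γ := gaussianMeasure d with hγ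
  haveI : IsProbabilityMeasure γ := gaussian_isProbability d
  have hcomp : ∀ F : ℝ → ℝ, Continuous F → Integrable (fun x => F (f x)) γ := by
    intro F hF
    obtain ⟨B, hB⟩ :=
      (isCompact_Icc (a := c) (b := M)).exists_bound_of_continuousOn hF.continuousOn
    exact (integrable_const B).mono' ((hF.comp hfc).aestronglyMeasurable)
      (Filter.Eventually.of_forall fun x => hB (f x) ⟨hflb x, hfub x⟩)
  have hIf : Integrable f γ := by simpa using hcomp id continuous_id
  have hcontp : Continuous fun y : ℝ => y ^ p :=
    continuous_iff_continuousAt.mpr fun x => Real.continuousAt_rpow_const x p (Or.inr hp0.le)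
  have hIfp : Integrable (fun x => f x ^ p) γ := hcomp (fun y => y ^ p) hcontp
  set A := ∫ x, f x ∂γ with hAdef
  have hAc : c ≤ A := by
    have h := integral_mono (integrable_const c) hIf (fun x => hflb x)
    simpa [integral_const, measure_univ] using h
  have hA0 : 0 < A := lt_of_lt_of_le hc hAc
  have hAp : 0 < A ^ p := Real.rpow_pos_of_pos hA0 p
  set Ip := ∫ x, f x ^ p ∂γ with hIpdef
  set E := ∫ x, f x * Real.log (f x / A) ∂γ with hEdef
  have hElb : Integrable (fun x => f x * Real.log (f x / A)) γ := by
    have hFc : Continuous fun y : ℝ => y * Real.log y - y * Real.log A :=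
      (Real.continuous_mul_log).sub (continuous_id.mul continuous_const)
    refine (hcomp _ hFc).congr (Filter.Eventually.of_forall fun x => ?_)
    show f x * Real.log (f x) - f x * Real.log A = f x * Real.log (f x / A)
    rw [Real.log_div (hf0 x).ne' hA0.ne']
    ring
  have hE0 : 0 ≤ E := by
    have pw0 : ∀ x, f x - A ≤ f x * Real.log (f x / A) := by
      intro x
      have h := Real.log_le_sub_one_of_pos (div_pos hA0 (hf0 x))
      have hlog : Real.log (A / f x) = -Real.log (f x / A) := by
        rw [← Real.log_inv]; congr 1; rw [inv_div]
      rw [hlog] at h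
      have h2 := mul_le_mul_of_nonneg_left h (hf0 x).le
      have h3 : f x * (A / f x) = A := by
        rw [mul_div_assoc']
        exact mul_div_cancel_left₀ A (hf0 x).ne'
      nlinarith
    have hsub : Integrable (fun x => f x - A) γ := hIf.sub (integrable_const A)
    have hmono := integral_mono hsub hElb (fun x => pw0 x)
    rw [integral_sub hIf (integrable_const A), integral_const] at hmono
    simp only [measure_univ, probReal_univ, ENNReal.toReal_one, one_smul] at hmono
    rw [← hAdef, ← hEdef] at hmono
    linarith
  have hIdiv : Integrable (fun x => f x / A) γ := hIf.div_const A
  have hIdivp : Integrable (fun x => (f x / A) ^ p) γ := by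
    refine (hIfp.div_const (A ^ p)).congr (Filter.Eventually.of_forall fun x => ?_)
    show f x ^ p / A ^ p = (f x / A) ^ p
    rw [Real.div_rpow (hf0 x).le hA0.le p]
  have hIzl : Integrable (fun x => (f x / A) * Real.log (f x / A)) γ := by
    refine (hElb.div_const A).congr (Filter.Eventually.of_forall fun x => ?_)
    show f x * Real.log (f x / A) / A = (f x / A) * Real.log (f x / A)
    ring
  have hI1 : ∫ x, f x / A ∂γ = 1 := by
    rw [integral_div, ← hAdef, div_self hA0.ne']
  have hIzp : ∫ x, (f x / A) ^ p ∂γ = Ip / A ^ p := by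
    have : ∫ x, (f x / A) ^ p ∂γ = ∫ x, f x ^ p / A ^ p ∂γ :=
      integral_congr_ae (Filter.Eventually.of_forall fun x => Real.div_rpow (hf0 x).le hA0.le p)
    rw [this, integral_div, ← hIpdef]
  have hIzl2 : ∫ x, (f x / A) * Real.log (f x / A) ∂γ = E / A := by
    have : ∫ x, (f x / A) * Real.log (f x / A) ∂γ
        = ∫ x, (f x * Real.log (f x / A)) / A ∂γ :=
      integral_congr_ae (Filter.Eventually.of_forall fun x => by ring)
    rw [this, integral_div, ← hEdef]
  have hJ : Ip ≤ A ^ p := by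
    have pwa : ∀ x, (f x / A) ^ p ≤ p * (f x / A) + (1 - p) :=
      fun x => my_amgm (div_pos (hf0 x) hA0) hp0.le hp1.le
    have hr : Integrable (fun x => p * (f x / A) + (1 - p)) γ :=
      (hIdiv.const_mul p).add (integrable_const _)
    have h := integral_mono hIdivp hr (fun x => pwa x)
    rw [hIzp, integral_add (hIdiv.const_mul p) (integrable_const _), integral_const_mul,
      hI1, integral_const] at h
    simp only [measure_univ, probReal_univ, ENNReal.toReal_one, one_smul, mul_one] at h
    rw [div_le_iff₀ hAp] at h
    nlinarith
  have hKEY : ∀ t : ℝ, 0 < t → Real.Gamma (1-p) * (1 - Ip / A ^ p)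
      ≤ p * t ^ (p-1) * (E / A) + (1-p) * t ^ p := by
    intro t ht
    set b := max (p * t ^ (p-1) - Real.Gamma (2-p)) 0 with hbdef
    have hLint : Integrable (fun x => Real.Gamma (1-p) * ((f x / A) - (f x / A) ^ p)) γ :=
      (hIdiv.sub hIdivp).const_mul _
    have hR1int : Integrable (fun x => p * t ^ (p-1) * ((f x / A) * Real.log (f x / A))) γ :=
      hIzl.const_mul _
    have hR2int : Integrable (fun x => (1-p) * t ^ p * (f x / A)) γ := hIdiv.const_mul _
    have hR3int : Integrable (fun x => b * (1 - f x / A)) γ :=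
      ((integrable_const 1).sub hIdiv).const_mul _
    have hptw : ∀ x, Real.Gamma (1-p) * ((f x / A) - (f x / A) ^ p)
        ≤ p * t ^ (p-1) * ((f x / A) * Real.log (f x / A)) + (1-p) * t ^ p * (f x / A)
          + b * (1 - f x / A) := fun x => my_pw hp0 hp1 ht (div_pos (hf0 x) hA0)
    have hR12 : Integrable (fun x => p * t ^ (p-1) * ((f x / A) * Real.log (f x / A))
        + (1-p) * t ^ p * (f x / A)) γ := hR1int.add hR2int
    have hmono := integral_mono hLint (hR12.add hR3int) (fun x => hptw x)
    simp only [Pi.add_apply] at hmono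
    rw [integral_const_mul, integral_sub hIdiv hIdivp, hI1, hIzp,
      integral_add hR12 hR3int, integral_add hR1int hR2int,
      integral_const_mul, integral_const_mul, integral_const_mul, hIzl2, hI1,
      integral_sub (integrable_const 1) hIdiv, hI1, integral_const] at hmono
    simp only [measure_univ, probReal_univ, ENNReal.toReal_one, one_smul, mul_one, sub_self, mul_zero,
      add_zero] at hmono
    linarith
  rcases eq_or_lt_of_le hE0 with hEeq | hEpos
  · -- E = 0
    have hfin : Ip = A ^ p := by
      have hle0 : Real.Gamma (1-p) * (1 - Ip / A ^ p) ≤ 0 := by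
        by_contra hpos
        push_neg at hpos
        set ε := Real.Gamma (1-p) * (1 - Ip / A ^ p) with hεdef
        have hε2 : 0 < ε / 2 / (1-p) := by positivity
        set s : ℝ := (ε / 2 / (1-p)) ^ (1/p : ℝ) with hsdef
        have hs : 0 < s := Real.rpow_pos_of_pos hε2 _
        have hk := hKEY s hs
        rw [← hEeq] at hk
        have hsp : s ^ p = ε / 2 / (1-p) := by
          rw [hsdef, ← Real.rpow_mul hε2.le, one_div, inv_mul_cancel₀ hp0.ne',
            Real.rpow_one]
        rw [hsp] at hk
        have hz : p * s ^ (p-1) * ((0:ℝ) / A) = 0 := by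
          rw [zero_div, mul_zero]
        rw [hz, zero_add] at hk
        have : (1-p) * (ε / 2 / (1-p)) = ε / 2 := by field_simp
        rw [this] at hk
        linarith
      have h2 : Ip / A ^ p ≤ 1 := by rw [div_le_one hAp]; exact hJ
      have h1 : 1 - Ip / A ^ p ≤ 0 := by nlinarith
      have h3 : Ip / A ^ p = 1 := le_antisymm h2 (by linarith)
      rw [div_eq_one_iff_eq hAp.ne'] at h3
      exact h3
    rw [hfin, sub_self, Real.zero_rpow (one_div_ne_zero hp0.ne'), mul_zero, ← hEeq]
  · -- 0 < E
    set s : ℝ := E / A with hsdef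
    have hs0 : 0 < s := div_pos hEpos hA0
    have hk := hKEY s hs0
    have htpt : s ^ (p-1) * s = s ^ p := by
      rw [show p = (p-1)+1 by ring, Real.rpow_add_one hs0.ne']
      ring_nf
    have hmain : Real.Gamma (1-p) * (1 - Ip / A ^ p) ≤ s ^ p := by
      have hid : p * s ^ (p-1) * s + (1-p) * s ^ p = s ^ p := by
        linear_combination p * htpt
      linarith
    have htp : s ^ p = E ^ p / A ^ p := by
      rw [hsdef, Real.div_rpow hEpos.le hA0.le]
    have h5 : Real.Gamma (1-p) * (A ^ p - Ip) ≤ E ^ p := by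
      have h := mul_le_mul_of_nonneg_left hmain hAp.le
      rw [htp] at h
      have e1 : A ^ p * (Real.Gamma (1-p) * (1 - Ip / A ^ p))
          = Real.Gamma (1-p) * (A ^ p - Ip) := by
        field_simp
      have e2 : A ^ p * (E ^ p / A ^ p) = E ^ p := by field_simp
      rw [e1, e2] at h
      exact h
    have hD : 0 ≤ A ^ p - Ip := by linarith
    calc Real.Gamma (1-p) ^ (1/p : ℝ) * (A ^ p - Ip) ^ (1/p : ℝ)
        = (Real.Gamma (1-p) * (A ^ p - Ip)) ^ (1/p : ℝ) := (Real.mul_rpow hG1.le hD).symm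
      _ ≤ (E ^ p) ^ (1/p : ℝ) := Real.rpow_le_rpow (mul_nonneg hG1.le hD) h5 (by positivity)
      _ = E := by
          rw [← Real.rpow_mul hEpos.le, mul_one_div, div_self hp0.ne', Real.rpow_one]
end

section
/- Let C(p,q) := (Γ(1+1/q)/Γ(1+1/q−p/q)) · q^{p/q} for 0 < p < q. Then for every fixed p > 0, lim_{q → p+} C(p,q) = 1 and lim_{q → ∞} C(p,q) = 1. -/
open Real Filter

/-- The constant in the Hölder-type inequality. -/
noncomputable def holderConst (p q : ℝ) : ℝ :=
  (Real.Gamma (1 + 1 / q) / Real.Gamma (1 + 1 / q - p / q)) * q ^ (p / q)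

/-!
`C(p, ·)` is continuous at `p`, where the two Gamma arguments differ by exactly one, so
`Γ(1 + 1/p) = Γ(1/p) / p` cancels the factor `p ^ 1` and `C(p, p) = 1`. As `q → ∞` both Gamma
arguments tend to `1` and `q ^ (p / q) → 1`, so `C(p, q) → Γ(1) / Γ(1) = 1`.
-/

theorem Real.continuousAt_Gamma_of_pos {s : ℝ} (hs : 0 < s) : ContinuousAt Gamma s :=
  Real.differentiableOn_Gamma_Ioi.continuousOn.continuousAt (Ioi_mem_nhds hs)

theorem holderConst_self {p : ℝ} (hp : 0 < p) : holderConst p p = 1 := by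
  have hΓ : Gamma (1 / p) ≠ 0 := (Gamma_pos_of_pos (by positivity)).ne'
  rw [holderConst, div_self hp.ne', add_sub_cancel_left, rpow_one, add_comm,
    Gamma_add_one (by positivity)]
  field_simp

theorem continuousAt_holderConst {p q : ℝ} (hq : 0 < q) (hpq : p < q + 1) :
    ContinuousAt (holderConst p) q := by
  have hq0 : q ≠ 0 := hq.ne'
  have hden : 0 < 1 + 1 / q - p / q := by
    rw [show 1 + 1 / q - p / q = (q + 1 - p) / q by field_simp]
    exact div_pos (by linarith) hq
  have hnum : ContinuousAt (fun x : ℝ => Gamma (1 + 1 / x)) q :=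
    (continuousAt_Gamma_of_pos (by positivity)).comp (f := fun x => 1 + 1 / x)
      (by fun_prop (disch := exact hq0))
  have hdenom : ContinuousAt (fun x : ℝ => Gamma (1 + 1 / x - p / x)) q :=
    (continuousAt_Gamma_of_pos hden).comp (f := fun x => 1 + 1 / x - p / x)
      (by fun_prop (disch := exact hq0))
  have hpow : ContinuousAt (fun x : ℝ => x ^ (p / x)) q :=
    continuousAt_id.rpow (continuousAt_const.div continuousAt_id hq0) (Or.inl hq0)
  exact (hnum.div hdenom (Gamma_pos_of_pos hden).ne').mul hpow

theorem tendsto_holderConst_atTop (p : ℝ) : Tendsto (holderConst p) atTop (nhds 1) := by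
  have hinv : Tendsto (fun q : ℝ => 1 / q) atTop (nhds 0) := by
    simpa using tendsto_inv_atTop_zero
  have hnumArg : Tendsto (fun q : ℝ => 1 + 1 / q) atTop (nhds 1) := by
    simpa using tendsto_const_nhds.add hinv
  have hdenArg : Tendsto (fun q : ℝ => 1 + 1 / q - p / q) atTop (nhds 1) := by
    simpa [div_eq_mul_inv] using hnumArg.sub (hinv.const_mul p)
  have hΓ : ∀ {f : ℝ → ℝ}, Tendsto f atTop (nhds 1) →
      Tendsto (fun q => Gamma (f q)) atTop (nhds 1) := fun hf => by
    simpa [Gamma_one, Function.comp_def] using (continuousAt_Gamma_of_pos one_pos).tendsto.comp hf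
  have hpow : Tendsto (fun q : ℝ => q ^ (p / q)) atTop (nhds 1) := by
    simpa using tendsto_rpow_div_mul_add p 1 0 zero_ne_one
  unfold holderConst
  simpa using ((hΓ hnumArg).div (hΓ hdenArg) one_ne_zero).mul hpow

/-- `C(p,q) → 1` both as `q → p+` and as `q → ∞`. -/
theorem holderConst_limits (p : ℝ) (hp : 0 < p) :
    Tendsto (fun q => holderConst p q) (nhdsWithin p (Set.Ioi p)) (nhds 1) ∧
      Tendsto (fun q => holderConst p q) atTop (nhds 1) := by
  refine ⟨?_, tendsto_holderConst_atTop p⟩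
  have hcont := continuousAt_holderConst hp (lt_add_one p)
  rw [ContinuousAt, holderConst_self hp] at hcont
  exact hcont.mono_left nhdsWithin_le_nhds
end

section
/- For all real v > 0, the identity (2/√π) ∫_0^∞ (√η e^{−η})/(1 + vη) dη = ∫_0^∞ λ e^{−λ} exp(−(v/4)λ²) dλ holds. -/
/-!
Subordination: for `l > 0`, `√π e^{-l} = ∫₀^∞ η^{-1/2} e^{-η - l²/(4η)} dη`, which follows
from the Cauchy–Schlömilch substitution `u ↦ u - b/u` after `η = u²`. Inserting it turns the
right-hand side into a double integral over `(0,∞)²`; integrating in `l` first instead gives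
`∫₀^∞ l e^{-l²(1 + vη)/(4η)} dl = 2η/(1 + vη)`, which produces the left-hand side.
-/

open MeasureTheory Real Set

section CauchySchlomilch

variable {E : Type*} [NormedAddCommGroup E] [NormedSpace ℝ E] {b : ℝ}

lemma hasDerivAt_sub_div {u : ℝ} (hu : u ≠ 0) :
    HasDerivAt (fun u => u - b / u) (1 + b / u ^ 2) u := by
  simp only [div_eq_mul_inv]
  exact ((hasDerivAt_id' u).fun_sub ((hasDerivAt_inv hu).const_mul b)).congr_deriv (by ring)

lemma hasDerivAt_const_div {u : ℝ} (hu : u ≠ 0) :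
    HasDerivAt (fun u => b / u) (-(b / u ^ 2)) u := by
  simp only [div_eq_mul_inv]
  exact ((hasDerivAt_inv hu).const_mul b).congr_deriv (by ring)

lemma strictMonoOn_sub_div (hb : 0 < b) : StrictMonoOn (fun u : ℝ => u - b / u) (Ioi 0) :=
  fun _ hx _ _ hxy => sub_lt_sub hxy (div_lt_div_of_pos_left hb hx hxy)

lemma image_sub_div_Ioi (hb : 0 < b) : (fun u : ℝ => u - b / u) '' Ioi 0 = univ := by
  refine eq_univ_of_forall fun s => ?_
  set r := √(s ^ 2 + 4 * b)
  have hr : r ^ 2 = s ^ 2 + 4 * b := sq_sqrt (by positivity)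
  have hsr : |s| < r := by
    rw [← sqrt_sq_eq_abs]
    exact sqrt_lt_sqrt (sq_nonneg s) (by linarith)
  have hu : 0 < (s + r) / 2 := by linarith [neg_abs_le s]
  refine ⟨(s + r) / 2, hu, ?_⟩
  show (s + r) / 2 - b / ((s + r) / 2) = s
  rw [show b = (r - s) / 2 * ((s + r) / 2) by linear_combination -hr / 4,
    mul_div_cancel_right₀ _ hu.ne']
  ring

lemma image_div_Ioi (hb : 0 < b) : (fun u : ℝ => b / u) '' Ioi 0 = Ioi 0 := by
  refine (Set.image_subset_iff.2 fun u hu => div_pos hb hu).antisymm fun w hw => ?_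
  exact ⟨b / w, div_pos hb hw, div_div_cancel₀ hb.ne'⟩

lemma integral_Ioi_smul_comp_sub_div (hb : 0 < b) (g : ℝ → E) :
    ∫ u in Ioi 0, (1 + b / u ^ 2) • g (u - b / u) = ∫ s, g s := by
  have h := integral_image_eq_integral_abs_deriv_smul measurableSet_Ioi
    (fun u hu => (hasDerivAt_sub_div (b := b) (ne_of_gt hu)).hasDerivWithinAt)
    (strictMonoOn_sub_div hb).injOn g
  rw [image_sub_div_Ioi hb, Measure.restrict_univ] at h
  rw [h]
  refine setIntegral_congr_fun measurableSet_Ioi fun u _ => ?_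
  rw [abs_of_pos (by positivity)]

lemma integrableOn_Ioi_smul_comp_sub_div (hb : 0 < b) {g : ℝ → E} (hg : Integrable g) :
    IntegrableOn (fun u => (1 + b / u ^ 2) • g (u - b / u)) (Ioi 0) := by
  have h := (integrableOn_image_iff_integrableOn_abs_deriv_smul measurableSet_Ioi
    (fun u hu => (hasDerivAt_sub_div (b := b) (ne_of_gt hu)).hasDerivWithinAt)
    (strictMonoOn_sub_div hb).injOn g).1
  rw [image_sub_div_Ioi hb, integrableOn_univ] at h
  refine (h hg).congr_fun (fun u _ => ?_) measurableSet_Ioi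
  simp only [abs_of_pos (by positivity : 0 < 1 + b / u ^ 2)]

lemma integral_Ioi_smul_comp_div (hb : 0 < b) (g : ℝ → E) :
    ∫ u in Ioi 0, (b / u ^ 2) • g (b / u) = ∫ u in Ioi 0, g u := by
  have h := integral_image_eq_integral_abs_deriv_smul measurableSet_Ioi
    (fun u hu => (hasDerivAt_const_div (b := b) (ne_of_gt hu)).hasDerivWithinAt)
    (StrictAntiOn.injOn fun x hx _ _ hxy => div_lt_div_of_pos_left hb hx hxy) g
  rw [image_div_Ioi hb] at h
  rw [h]
  refine setIntegral_congr_fun measurableSet_Ioi fun u (hu : 0 < u) => ?_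
  rw [abs_neg, abs_of_pos (by positivity)]

/-- The substitution `u ↦ b / u` shows that the two summands of `(1 + b / u ^ 2) • g (u - b / u)`
have the same integral. -/
theorem integral_Ioi_comp_sub_div_of_even (hb : 0 < b) {g : ℝ → E} (hg : Integrable g)
    (hg_even : ∀ s, g (-s) = g s) :
    ∫ u in Ioi 0, g (u - b / u) = (2 : ℝ)⁻¹ • ∫ s, g s := by
  have hsum := integrableOn_Ioi_smul_comp_sub_div hb hg
  have hone : IntegrableOn (fun u => g (u - b / u)) (Ioi 0) := by
    have hbound : ∀ u : ℝ, ‖(1 + b / u ^ 2)⁻¹‖ ≤ 1 := fun u => by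
      rw [norm_inv, Real.norm_of_nonneg (by positivity)]
      exact inv_le_one_of_one_le₀ (le_add_of_nonneg_right (by positivity))
    have hmeas : Measurable fun u : ℝ => (1 + b / u ^ 2)⁻¹ := by fun_prop
    refine IntegrableOn.congr_fun
      (hsum.bdd_smul 1 hmeas.aestronglyMeasurable (ae_of_all _ hbound))
      (fun u _ => ?_) measurableSet_Ioi
    have hpos : 1 + b / u ^ 2 ≠ 0 := by positivity
    simp only [Pi.smul_apply', smul_smul, inv_mul_cancel₀ hpos, one_smul]
  have hweighted : IntegrableOn (fun u => (b / u ^ 2) • g (u - b / u)) (Ioi 0) :=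
    (hsum.sub hone).congr_fun
      (fun u _ => by simp only [Pi.sub_apply, add_smul, one_smul, add_sub_cancel_left])
      measurableSet_Ioi
  have hsymm : ∫ u in Ioi 0, (b / u ^ 2) • g (u - b / u) = ∫ u in Ioi 0, g (u - b / u) := by
    rw [← integral_Ioi_smul_comp_div hb fun u => g (u - b / u)]
    refine setIntegral_congr_fun measurableSet_Ioi fun u (hu : 0 < u) => ?_
    rw [div_div_cancel₀ hb.ne', ← neg_sub, hg_even]
  rw [← integral_Ioi_smul_comp_sub_div hb]
  simp only [add_smul, one_smul]
  rw [integral_add hone hweighted, hsymm, ← two_smul ℝ, smul_smul, inv_mul_cancel₀ two_ne_zero,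
    one_smul]

theorem integral_Ioi_exp_neg_sq_sub_div (hb : 0 < b) :
    ∫ u in Ioi 0, exp (-(u - b / u) ^ 2) = √π / 2 := by
  have hgauss : ∫ s, exp (-s ^ 2) = √π := by simpa using integral_gaussian 1
  rw [integral_Ioi_comp_sub_div_of_even hb (g := fun s => exp (-s ^ 2))
    (by simpa using integrable_exp_neg_mul_sq one_pos) (fun s => by simp), hgauss, smul_eq_mul]
  ring

end CauchySchlomilch

theorem integral_Ioi_exp_neg_sub_div_div_sqrt {l : ℝ} (hl : 0 < l) :
    ∫ η in Ioi 0, exp (-η - l ^ 2 / (4 * η)) / √η = √π * exp (-l) := by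
  rw [← integral_comp_rpow_Ioi _ two_ne_zero]
  calc _ = ∫ u in Ioi 0, 2 * exp (-l) * exp (-(u - (l / 2) / u) ^ 2) := by
        refine setIntegral_congr_fun measurableSet_Ioi fun u (hu : 0 < u) => ?_
        rw [rpow_two, show (2 : ℝ) - 1 = 1 by norm_num, rpow_one, sqrt_sq hu.le, smul_eq_mul,
          abs_two, mul_assoc (2 : ℝ) (exp (-l)), ← exp_add, mul_assoc, mul_div_cancel₀ _ hu.ne']
        congr 2
        field_simp
        ring
    _ = √π * exp (-l) := by
        rw [integral_const_mul, integral_Ioi_exp_neg_sq_sub_div (by positivity)]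
        ring

lemma integral_Ioi_mul_exp_neg_mul_sq {b : ℝ} (hb : 0 < b) :
    ∫ x in Ioi (0 : ℝ), x * exp (-b * x ^ 2) = (2 * b)⁻¹ := by
  have h := integral_mul_cexp_neg_mul_sq (b := (b : ℂ)) (by simpa using hb)
  apply Complex.ofReal_injective
  rw [← integral_complex_ofReal]
  push_cast
  exact h

noncomputable def subordinationIntegrand (v l η : ℝ) : ℝ :=
  l * exp (-(v / 4) * l ^ 2) * (exp (-η - l ^ 2 / (4 * η)) / √η)

lemma integrableOn_Ioi_exp_neg_div_sqrt :
    IntegrableOn (fun η : ℝ => exp (-η) / √η) (Ioi 0) := by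
  refine (GammaIntegral_convergent one_half_pos).congr_fun (fun η (hη : 0 < η) => ?_)
    measurableSet_Ioi
  show exp (-η) * η ^ ((1 / 2 : ℝ) - 1) = exp (-η) / √η
  rw [show (1 / 2 : ℝ) - 1 = -(1 / 2) by norm_num, rpow_neg hη.le, ← sqrt_eq_rpow,
    div_eq_mul_inv]

lemma integrable_uncurry_subordinationIntegrand {v : ℝ} (hv : 0 < v) :
    Integrable (Function.uncurry (subordinationIntegrand v))
      ((volume.restrict (Ioi 0)).prod (volume.restrict (Ioi 0))) := by
  have hdom := ((integrable_mul_exp_neg_mul_sq (by positivity : 0 < v / 4)).integrableOn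
    (s := Ioi 0)).mul_prod integrableOn_Ioi_exp_neg_div_sqrt
  refine hdom.mono' (by unfold subordinationIntegrand; fun_prop) ?_
  rw [Measure.prod_restrict]
  filter_upwards [ae_restrict_mem (measurableSet_Ioi.prod measurableSet_Ioi)]
    with ⟨l, η⟩ ⟨hl, hη⟩
  simp only [mem_Ioi] at hl hη
  have hexp : exp (-η - l ^ 2 / (4 * η)) ≤ exp (-η) :=
    exp_le_exp.2 (sub_le_self _ (by positivity))
  rw [Function.uncurry_apply_pair, subordinationIntegrand, norm_of_nonneg (by positivity)]
  gcongr

lemma integral_Ioi_subordinationIntegrand_left {v l : ℝ} (hl : 0 < l) :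
    ∫ η in Ioi 0, subordinationIntegrand v l η
      = √π * (l * exp (-l) * exp (-(v / 4) * l ^ 2)) := by
  simp only [subordinationIntegrand]
  rw [integral_const_mul, integral_Ioi_exp_neg_sub_div_div_sqrt hl]
  ring

lemma integral_Ioi_subordinationIntegrand_right {v η : ℝ} (hv : 0 ≤ v) (hη : 0 < η) :
    ∫ l in Ioi 0, subordinationIntegrand v l η = 2 * (√η * exp (-η) / (1 + v * η)) := by
  have hsplit : ∀ l, subordinationIntegrand v l η
      = exp (-η) / √η * (l * exp (-(v / 4 + 1 / (4 * η)) * l ^ 2)) := fun l => by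
    rw [subordinationIntegrand, show -η - l ^ 2 / (4 * η) = -η + -(1 / (4 * η)) * l ^ 2 by ring,
      neg_add, add_mul, exp_add, exp_add]
    ring
  simp only [hsplit]
  rw [integral_const_mul, integral_Ioi_mul_exp_neg_mul_sq (by positivity)]
  have : 0 < √η := sqrt_pos.2 hη
  field_simp
  rw [sq_sqrt hη.le]
  ring

theorem gaussian_fraction_integral_identity (v : ℝ) (hv : 0 < v) :
    (2 / Real.sqrt π) *
        ∫ η in Set.Ioi (0 : ℝ), Real.sqrt η * Real.exp (-η) / (1 + v * η)
      = ∫ l in Set.Ioi (0 : ℝ), l * Real.exp (-l) * Real.exp (-(v / 4) * l ^ 2) := by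
  have hπ : √π ≠ 0 := (sqrt_pos.2 pi_pos).ne'
  calc (2 / √π) * ∫ η in Ioi 0, √η * exp (-η) / (1 + v * η)
      = (√π)⁻¹ * ∫ η in Ioi 0, ∫ l in Ioi 0, subordinationIntegrand v l η := by
        rw [setIntegral_congr_fun measurableSet_Ioi
          fun η hη => integral_Ioi_subordinationIntegrand_right hv.le hη, integral_const_mul]
        ring
    _ = (√π)⁻¹ * ∫ l in Ioi 0, ∫ η in Ioi 0, subordinationIntegrand v l η := by
        rw [integral_integral_swap (integrable_uncurry_subordinationIntegrand hv)]
    _ = ∫ l in Ioi 0, l * exp (-l) * exp (-(v / 4) * l ^ 2) := by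
        rw [← integral_const_mul]
        refine setIntegral_congr_fun measurableSet_Ioi fun l hl => ?_
        rw [integral_Ioi_subordinationIntegrand_left hl, inv_mul_cancel_left₀ hπ]
end
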